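/- Let F be any field, n ≥ 1 with (n, char F) ≠ (1, 2). Then the minimum dimension of a faithful finite-dimensional h(n)-module is n + 2. -/

import Mathlib

/-- `X`, `Y`, `z` form a symplectic basis of a Heisenberg Lie algebra `L` of
dimension `2n+1` over `F`: they are a basis of `L`, with brackets
`⁅X i, Y i⁆ = z` and all other brackets of basis vectors zero. -/
structure IsHeisenbergBasis (F : Type*) [Field F] {n : ℕ} {L : Type*}
    [LieRing L] [LieAlgebra F L] (X Y : Fin n → L) (z : L) : Prop where
  indep : LinearIndependent F (Sum.elim X (Sum.elim Y fun _ : Unit => z))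
  span : Submodule.span F (Set.range (Sum.elim X (Sum.elim Y fun _ : Unit => z))) = ⊤
  lie_xy : ∀ i j, ⁅X i, Y j⁆ = if i = j then z else 0
  lie_xx : ∀ i j, ⁅X i, X j⁆ = 0
  lie_yy : ∀ i j, ⁅Y i, Y j⁆ = 0
  lie_xz : ∀ i, ⁅X i, z⁆ = 0
  lie_yz : ∀ i, ⁅Y i, z⁆ = 0

attribute [local instance] LieRing.ofAssociativeRing

/-!
Upper bound: `X i ↦ E₀,ᵢ`, `Y i ↦ Eᵢ,ₙ₊₁`, `z ↦ E₀,ₙ₊₁` is a representation on `F^(n+2)`, faithful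
because every nonzero ideal of `h(n)` contains `z`.

Lower bound: let `R` be faithful on `V`, so `A = R z ≠ 0`, and let `A v ≠ 0`. If `R x v` and `R y v`
lie in `span {v, A v}`, then `R x` and `R y` act on `v` through polynomials in the central `A`, so
`R ⁅x, y⁆ v = 0` and `⁅x, y⁆ = 0`. Such `x` form an abelian, i.e. isotropic, subspace of `h(n)`,
of dimension at most `n + 1`; rank–nullity for `x ↦ R x v` modulo `span {v, A v}` then gives
`dim V ≥ n + dim span {v, A v}`, which is `n + 2` unless `A` is a scalar `c`.

If `A = c` and `dim V = n + 1`, the count forces `V = R(L) v + F v` and yields `x ∉ F z` with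
`R x v = a v`. Then `N = R x - a` kills `v` and maps `V` into `F v`, so `N * N = 0`, while
`[N, R y]` is a nonzero scalar for suitable `y`. Multiplying this commutator by `N` on the left and
on the right gives `2 = 0`, and applying it to vectors gives `V = span {v, R y v}`; so `n = 1` and
`char F = 2`.
-/

open Module Submodule

theorem finrank_range_mkQ_comp_add_finrank_comap {K M N : Type*} [Field K] [AddCommGroup M]
    [Module K M] [FiniteDimensional K M] [AddCommGroup N] [Module K N] (φ : M →ₗ[K] N)
    (W : Submodule K N) :
    finrank K (LinearMap.range (W.mkQ ∘ₗ φ)) + finrank K (W.comap φ) = finrank K M := by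
  rw [← LinearMap.finrank_range_add_finrank_ker (W.mkQ ∘ₗ φ), LinearMap.ker_comp, ker_mkQ]

theorem ringChar_eq_two_and_finrank_le_two_of_sub_eq_smul_one {F V : Type*} [Field F]
    [AddCommGroup V] [Module F V] {N M : Module.End F V} {v : V} {c : F} (hv : v ≠ 0)
    (hc : c ≠ 0) (hNv : N v = 0) (hN : ∀ w, N w ∈ F ∙ v) (hNM : N * M - M * N = c • 1) :
    ringChar F = 2 ∧ finrank F V ≤ 2 := by
  have hNN : N * N = 0 := by
    ext w
    obtain ⟨a, ha⟩ := mem_span_singleton.mp (hN w)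
    simp [← ha, hNv]
  have hleft : c • N = -(N * M * N) := by
    calc c • N = N * (N * M - M * N) := by rw [hNM, mul_smul_comm, mul_one]
      _ = -(N * M * N) := by rw [mul_sub, ← mul_assoc, hNN, zero_mul, zero_sub, mul_assoc]
  have hright : c • N = N * M * N := by
    calc c • N = (N * M - M * N) * N := by rw [hNM, smul_mul_assoc, one_mul]
      _ = N * M * N := by rw [sub_mul, mul_assoc M, hNN, mul_zero, sub_zero]
  have hN0 : N ≠ 0 := by
    rintro rfl
    have := LinearMap.congr_fun hNM v
    simp only [zero_mul, mul_zero, sub_zero, LinearMap.zero_apply, LinearMap.smul_apply,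
      Module.End.one_apply] at this
    exact smul_ne_zero hc hv this.symm
  have htwo : (2 : F) = 0 := by
    have : (2 * c) • N = 0 := by
      rw [two_mul, add_smul]
      nth_rw 1 [hleft]
      rw [hright, neg_add_cancel]
    simpa [hc, hN0] using this
  refine ⟨neg_one_eq_one_iff.mp (by linear_combination -htwo), ?_⟩
  have hspan : ⊤ ≤ span F (Set.range ![v, M v]) := fun w _ => by
    obtain ⟨a, ha⟩ := mem_span_singleton.mp (hN (M w))
    obtain ⟨b, hb⟩ := mem_span_singleton.mp (hN w)
    have hw : w = (c⁻¹ * a) • v - (c⁻¹ * b) • M v := by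
      have := LinearMap.congr_fun hNM w
      simp only [LinearMap.sub_apply, Module.End.mul_apply, ← ha, ← hb, map_smul,
        LinearMap.smul_apply, Module.End.one_apply] at this
      rw [mul_smul, mul_smul, ← smul_sub, this, smul_smul, inv_mul_cancel₀ hc, one_smul]
    rw [hw]
    exact sub_mem (smul_mem _ _ (subset_span ⟨0, rfl⟩)) (smul_mem _ _ (subset_span ⟨1, rfl⟩))
  rw [← finrank_top, ← top_le_iff.mp hspan]
  exact (finrank_range_le_card (R := F) ![v, M v]).trans_eq (by simp)

def LieHom.ofBasis {F ι L L' : Type*} [Field F] [LieRing L] [LieAlgebra F L] [LieRing L']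
    [LieAlgebra F L'] (b : Basis ι F L) (f : L →ₗ[F] L')
    (h : ∀ i j, f ⁅b i, b j⁆ = ⁅f (b i), f (b j)⁆) : L →ₗ⁅F⁆ L' where
  toLinearMap := f
  map_lie' {x y} := by
    have hbil : (LieModule.toEnd F L L : L →ₗ[F] Module.End F L).compr₂ f =
        (LieModule.toEnd F L' L' : L' →ₗ[F] Module.End F L').compl₁₂ f f :=
      LinearMap.ext_basis b b fun i j => by simpa using h i j
    simpa using LinearMap.congr_fun₂ hbil x y

section LieAlgebra

variable {F : Type*} [Field F] {L : Type*} [LieRing L] [LieAlgebra F L] {z : L}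

theorem two_mul_finrank_le_of_lie_eq_zero [FiniteDimensional F L] (hz : z ≠ 0)
    (hder : ∀ x y : L, ⁅x, y⁆ ∈ F ∙ z) (hcen : ∀ x : L, (∀ y : L, ⁅x, y⁆ = 0) → x ∈ F ∙ z)
    (S : Submodule F L) (hS : ∀ x ∈ S, ∀ y ∈ S, ⁅x, y⁆ = 0) :
    2 * finrank F S ≤ finrank F L + 1 := by
  obtain ⟨ζ, hζ⟩ : ∃ ζ : Dual F L, ζ z ≠ 0 := by
    by_contra! h
    exact hz ((forall_dual_apply_eq_zero_iff F z).mp h)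
  have hζlie : ∀ x y : L, ζ ⁅x, y⁆ = 0 → ⁅x, y⁆ = 0 := fun x y h => by
    obtain ⟨c, hc⟩ := mem_span_singleton.mp (hder x y)
    rw [← hc, map_smul, smul_eq_mul, mul_eq_zero] at h
    rw [← hc, h.resolve_right hζ, zero_smul]
  let B : LinearMap.BilinForm F L := (LieModule.toEnd F L L : L →ₗ[F] Module.End F L).compr₂ ζ
  have hSorth : S ≤ B.orthogonal S := fun y hy =>
    LinearMap.BilinForm.mem_orthogonal_iff.mpr fun x hx => by simp [B, hS x hx y hy]
  have hker : S ⊓ LinearMap.ker B ≤ F ∙ z := fun x hx =>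
    hcen x fun y => hζlie x y <| by
      simpa [B] using LinearMap.congr_fun (LinearMap.mem_ker.mp hx.2) y
  have hdim := LinearMap.BilinForm.finrank_add_finrank_orthogonal' (B := B) S
  have h1 := Submodule.finrank_mono hSorth
  have h2 := Submodule.finrank_mono hker
  rw [finrank_span_singleton hz] at h2
  omega

theorem LieHom.injective_of_map_ne_zero {L' : Type*} [LieRing L'] [LieAlgebra F L']
    (hder : ∀ x y : L, ⁅x, y⁆ ∈ F ∙ z) (hcen : ∀ x : L, (∀ y : L, ⁅x, y⁆ = 0) → x ∈ F ∙ z)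
    (f : L →ₗ⁅F⁆ L') (hf : f z ≠ 0) : Function.Injective f := by
  have hline : ∀ w ∈ F ∙ z, f w = 0 → w = 0 := fun w hw hfw => by
    obtain ⟨c, rfl⟩ := mem_span_singleton.mp hw
    rw [map_smul, smul_eq_zero] at hfw
    rw [hfw.resolve_right hf, zero_smul]
  refine (injective_iff_map_eq_zero f).mpr fun x hx => hline x (hcen x fun y => ?_) hx
  exact hline _ (hder x y) (by rw [LieHom.map_lie, hx, zero_lie])

variable {V : Type*} [AddCommGroup V] [Module F V] (R : L →ₗ⁅F⁆ Module.End F V)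

theorem map_lie_apply_eq_zero_of_apply_mem_span_pair (hcent : ∀ x : L, ⁅x, z⁆ = 0) {v : V}
    {x y : L} (hx : R x v ∈ span F {v, R z v}) (hy : R y v ∈ span F {v, R z v}) :
    R ⁅x, y⁆ v = 0 := by
  have hcomm : ∀ (x : L) (w : V), R x (R z w) = R z (R x w) := fun x w => by
    have := LinearMap.congr_fun (R.map_lie x z) w
    rw [hcent, map_zero, Ring.lie_def] at this
    exact sub_eq_zero.mp this.symm
  obtain ⟨a, b, ha⟩ := mem_span_pair.mp hx
  obtain ⟨c, d, hc⟩ := mem_span_pair.mp hy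
  rw [LieHom.map_lie, Ring.lie_def, LinearMap.sub_apply, Module.End.mul_apply,
    Module.End.mul_apply, ← ha, ← hc]
  simp only [map_add, map_smul, hcomm, ← ha, ← hc]
  module

theorem lie_eq_zero_of_apply_mem_span_pair (hcent : ∀ x : L, ⁅x, z⁆ = 0)
    (hder : ∀ x y : L, ⁅x, y⁆ ∈ F ∙ z) {v : V} (hv : R z v ≠ 0) {x y : L}
    (hx : R x v ∈ span F {v, R z v}) (hy : R y v ∈ span F {v, R z v}) : ⁅x, y⁆ = 0 := by
  obtain ⟨c, hc⟩ := mem_span_singleton.mp (hder x y)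
  have h := map_lie_apply_eq_zero_of_apply_mem_span_pair R hcent hx hy
  rw [← hc, map_smul, LinearMap.smul_apply, smul_eq_zero] at h
  rw [← hc, h.resolve_right hv, zero_smul]

theorem ringChar_eq_two_and_finrank_le_two_of_map_eq_smul_one
    (hder : ∀ x y : L, ⁅x, y⁆ ∈ F ∙ z) {c : F} (hc : c ≠ 0) (hRz : R z = c • 1) {v : V}
    (hv : v ≠ 0) (hspan : ∀ w, ∃ y, w - R y v ∈ F ∙ v) {x y : L} (hx : R x v ∈ F ∙ v)
    (hxy : ⁅x, y⁆ ≠ 0) : ringChar F = 2 ∧ finrank F V ≤ 2 := by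
  obtain ⟨a, ha⟩ := mem_span_singleton.mp hx
  set N := R x - a • 1
  have hNv : N v = 0 := by simp [N, ← ha]
  have hNR : ∀ y' (d : F), d • z = ⁅x, y'⁆ → N * R y' - R y' * N = (d * c) • 1 :=
    fun y' d hd => by
      rw [← smul_smul, ← hRz, ← map_smul, hd, LieHom.map_lie, Ring.lie_def]
      simp only [N, sub_mul, mul_sub, smul_mul_assoc, mul_smul_comm, one_mul, mul_one]
      abel
  have hN : ∀ w, N w ∈ F ∙ v := fun w => by
    obtain ⟨y', hy'⟩ := hspan w
    obtain ⟨e, he⟩ := mem_span_singleton.mp hy'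
    obtain ⟨d, hd⟩ := mem_span_singleton.mp (hder x y')
    have hNy' : N (R y' v) = (d * c) • v := by
      simpa [hNv] using LinearMap.congr_fun (hNR y' d hd) v
    rw [← sub_add_cancel w (R y' v), ← he, map_add, map_smul, hNv, smul_zero, zero_add, hNy']
    exact smul_mem _ _ (mem_span_singleton_self v)
  obtain ⟨d, hd⟩ := mem_span_singleton.mp (hder x y)
  have hd0 : d ≠ 0 := by
    rintro rfl
    exact hxy (by rw [← hd, zero_smul])
  exact ringChar_eq_two_and_finrank_le_two_of_sub_eq_smul_one hv (mul_ne_zero hd0 hc) hNv hN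
    (hNR y d hd)

end LieAlgebra

namespace IsHeisenbergBasis

variable {F : Type*} [Field F] {n : ℕ} {L : Type*} [LieRing L] [LieAlgebra F L]
  {X Y : Fin n → L} {z : L}

theorem finrank_eq (hH : IsHeisenbergBasis F X Y z) : finrank F L = 2 * n + 1 := by
  rw [← finrank_top, ← hH.span, finrank_span_eq_card hH.indep]
  simp only [Fintype.card_sum, Fintype.card_fin, Fintype.card_unit]
  ring

theorem finiteDimensional (hH : IsHeisenbergBasis F X Y z) : FiniteDimensional F L :=
  Module.finite_of_finrank_pos (by rw [hH.finrank_eq]; omega)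

theorem ne_zero (hH : IsHeisenbergBasis F X Y z) : z ≠ 0 :=
  hH.indep.ne_zero (Sum.inr (Sum.inr ()))

theorem exists_eq_sum (hH : IsHeisenbergBasis F X Y z) (x : L) :
    ∃ (a b : Fin n → F) (c : F), x = ∑ i, a i • X i + ∑ i, b i • Y i + c • z := by
  have hx : x ∈ Submodule.span F (Set.range (Sum.elim X (Sum.elim Y fun _ : Unit => z))) :=
    hH.span ▸ mem_top
  obtain ⟨f, rfl⟩ := (mem_span_range_iff_exists_fun F).mp hx
  exact ⟨fun i => f (.inl i), fun i => f (.inr (.inl i)), f (.inr (.inr ())), by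
    simp [Fintype.sum_sum_type, add_assoc]⟩

theorem lie_z (hH : IsHeisenbergBasis F X Y z) (x : L) : ⁅x, z⁆ = 0 := by
  obtain ⟨a, b, c, rfl⟩ := hH.exists_eq_sum x
  simp [sum_lie, hH.lie_xz, hH.lie_yz]

theorem z_lie (hH : IsHeisenbergBasis F X Y z) (x : L) : ⁅z, x⁆ = 0 := by
  rw [← lie_skew, hH.lie_z, neg_zero]

theorem lie_yx (hH : IsHeisenbergBasis F X Y z) (i j : Fin n) :
    ⁅Y i, X j⁆ = if j = i then -z else 0 := by
  rw [← lie_skew, hH.lie_xy]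
  split_ifs <;> simp

theorem lie_mem_span (hH : IsHeisenbergBasis F X Y z) (x y : L) : ⁅x, y⁆ ∈ F ∙ z := by
  have hbasis : ∀ k l, ⁅Sum.elim X (Sum.elim Y fun _ : Unit => z) k,
      Sum.elim X (Sum.elim Y fun _ : Unit => z) l⁆ ∈ F ∙ z := by
    rintro (i | i | ⟨⟩) (j | j | ⟨⟩) <;>
      simp only [Sum.elim_inl, Sum.elim_inr, hH.lie_xy, hH.lie_xx, hH.lie_yy, hH.lie_xz,
        hH.lie_yz, hH.lie_yx, hH.z_lie, zero_mem] <;>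
      split_ifs <;> simp [mem_span_singleton_self]
  have hbracket : (LieModule.toEnd F L L : L →ₗ[F] Module.End F L).compr₂ (F ∙ z).mkQ = 0 :=
    LinearMap.ext_on_range hH.span fun k => LinearMap.ext_on_range hH.span fun l => by
      simpa [Submodule.Quotient.mk_eq_zero] using hbasis k l
  simpa [Submodule.Quotient.mk_eq_zero] using LinearMap.congr_fun₂ hbracket x y

theorem mem_span_of_forall_lie_eq_zero (hH : IsHeisenbergBasis F X Y z) {x : L}
    (hx : ∀ y : L, ⁅x, y⁆ = 0) : x ∈ F ∙ z := by
  obtain ⟨a, b, c, rfl⟩ := hH.exists_eq_sum x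
  have ha : a = 0 := funext fun j => by
    simpa [sum_lie, hH.lie_xy, hH.lie_yy, hH.z_lie, hH.ne_zero] using hx (Y j)
  have hb : b = 0 := funext fun j => by
    simpa [sum_lie, hH.lie_yx, hH.lie_xx, hH.z_lie, hH.ne_zero] using hx (X j)
  simp [ha, hb, mem_span_singleton]

theorem exists_injective_lieHom (hH : IsHeisenbergBasis F X Y z) :
    ∃ R : L →ₗ⁅F⁆ Module.End F (Unit ⊕ Fin n ⊕ Unit → F), Function.Injective R := by
  classical
  let b := Basis.mk hH.indep hH.span.ge
  let mat : Fin n ⊕ Fin n ⊕ Unit → Matrix (Unit ⊕ Fin n ⊕ Unit) (Unit ⊕ Fin n ⊕ Unit) F :=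
    Sum.elim (fun i => Matrix.single (.inl ()) (.inr (.inl i)) 1)
      (Sum.elim (fun i => Matrix.single (.inr (.inl i)) (.inr (.inr ())) 1)
        fun _ => Matrix.single (.inl ()) (.inr (.inr ())) 1)
  have hb : ∀ k, b k = Sum.elim X (Sum.elim Y fun _ : Unit => z) k := fun k =>
    Basis.mk_apply _ _ _
  have hmat : ∀ k, b.constr F mat (Sum.elim X (Sum.elim Y fun _ : Unit => z) k) = mat k :=
    fun k => by rw [← hb, Basis.constr_basis]
  have hX : ∀ i, b.constr F mat (X i) = Matrix.single (.inl ()) (.inr (.inl i)) 1 :=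
    fun i => hmat (.inl i)
  have hY : ∀ i, b.constr F mat (Y i) = Matrix.single (.inr (.inl i)) (.inr (.inr ())) 1 :=
    fun i => hmat (.inr (.inl i))
  have hz : b.constr F mat z = Matrix.single (.inl ()) (.inr (.inr ())) 1 :=
    hmat (.inr (.inr ()))
  let ψ := LieHom.ofBasis b (b.constr F mat) fun k l => by
    rw [hb, hb]
    rcases k with i | i | ⟨⟩ <;> rcases l with j | j | ⟨⟩ <;>
      simp only [Sum.elim_inl, Sum.elim_inr, hH.lie_xy, hH.lie_xx, hH.lie_yy, hH.lie_xz,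
        hH.lie_yz, hH.lie_yx, hH.z_lie, lie_self] <;>
      (try split_ifs with hij) <;> simp only [map_neg, map_zero, hX, hY, hz] <;>
      simp_all [Ring.lie_def]
  refine ⟨Matrix.toLinAlgEquiv'.toLieEquiv.toLieHom.comp ψ,
    LieHom.injective_of_map_ne_zero hH.lie_mem_span
      (fun _ => hH.mem_span_of_forall_lie_eq_zero) _ ?_⟩
  change Matrix.toLinAlgEquiv' (b.constr F mat z) ≠ 0
  rw [hz, map_ne_zero_iff _ Matrix.toLinAlgEquiv'.injective]
  intro h
  simpa using congrFun₂ h (.inl ()) (.inr (.inr ()))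

variable {V : Type*} [AddCommGroup V] [Module F V]

theorem finrank_comap_le (hH : IsHeisenbergBasis F X Y z) (R : L →ₗ⁅F⁆ Module.End F V) {v : V}
    (hv : R z v ≠ 0) {W : Submodule F V} (hW : W ≤ Submodule.span F {v, R z v}) :
    finrank F (W.comap ((R : L →ₗ[F] Module.End F V).flip v)) ≤ n + 1 := by
  have := hH.finiteDimensional
  have h := two_mul_finrank_le_of_lie_eq_zero hH.ne_zero hH.lie_mem_span
    (fun _ => hH.mem_span_of_forall_lie_eq_zero) (W.comap ((R : L →ₗ[F] Module.End F V).flip v))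
    fun x hx y hy =>
      lie_eq_zero_of_apply_mem_span_pair R hH.lie_z hH.lie_mem_span hv (hW hx) (hW hy)
  rw [hH.finrank_eq] at h
  omega

theorem eq_one_and_ringChar_eq_two_of_map_eq_smul_one (hH : IsHeisenbergBasis F X Y z)
    (hn : 1 ≤ n) [FiniteDimensional F V] (R : L →ₗ⁅F⁆ Module.End F V) {c : F} (hc : c ≠ 0)
    (hRz : R z = c • 1) {v : V} (hv : v ≠ 0) (hV : finrank F V ≤ n + 1) :
    n = 1 ∧ ringChar F = 2 := by
  have := hH.finiteDimensional
  set φ := (R : L →ₗ[F] Module.End F V).flip v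
  have hcomap : finrank F ((F ∙ v).comap φ) ≤ n + 1 :=
    hH.finrank_comap_le R (by simp [hRz, hc, hv]) (Submodule.span_mono (by simp))
  have hrank := finrank_range_mkQ_comp_add_finrank_comap φ (F ∙ v)
  have hquot := (LinearMap.range ((F ∙ v).mkQ ∘ₗ φ)).finrank_le
  have hsum := (F ∙ v).finrank_quotient_add_finrank
  rw [finrank_span_singleton hv, hH.finrank_eq] at *
  have hspan : ∀ w, ∃ y, w - R y v ∈ F ∙ v := fun w => by
    have htop := Submodule.eq_top_of_finrank_eq
      (S := LinearMap.range ((F ∙ v).mkQ ∘ₗ φ)) (by omega)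
    obtain ⟨y, hy⟩ := LinearMap.range_eq_top.mp htop ((F ∙ v).mkQ w)
    exact ⟨y, (Submodule.Quotient.eq _).mp hy.symm⟩
  obtain ⟨x, hxv, hxz⟩ : ∃ x ∈ (F ∙ v).comap φ, x ∉ F ∙ z := by
    by_contra! h
    have := Submodule.finrank_mono (show (F ∙ v).comap φ ≤ F ∙ z from h)
    rw [finrank_span_singleton hH.ne_zero] at this
    omega
  obtain ⟨y, hxy⟩ : ∃ y : L, ⁅x, y⁆ ≠ 0 := by
    by_contra! h
    exact hxz (hH.mem_span_of_forall_lie_eq_zero h)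
  obtain ⟨hchar, hdim⟩ := ringChar_eq_two_and_finrank_le_two_of_map_eq_smul_one R
    hH.lie_mem_span hc hRz hv hspan hxv hxy
  exact ⟨by omega, hchar⟩

theorem add_two_le_finrank (hH : IsHeisenbergBasis F X Y z) (hn : 1 ≤ n)
    (hexc : ¬(n = 1 ∧ ringChar F = 2)) [FiniteDimensional F V] (R : L →ₗ⁅F⁆ Module.End F V)
    (hR : Function.Injective R) : n + 2 ≤ finrank F V := by
  have := hH.finiteDimensional
  have hRz : R z ≠ 0 := fun h => hH.ne_zero (hR (h.trans R.map_zero.symm))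
  by_cases hlin : ∃ v, LinearIndependent F ![v, R z v]
  · obtain ⟨v, hv⟩ := hlin
    set W := Submodule.span F (Set.range ![v, R z v])
    set φ := (R : L →ₗ[F] Module.End F V).flip v
    have hcomap : finrank F (W.comap φ) ≤ n + 1 :=
      hH.finrank_comap_le R (hv.ne_zero 1) (Submodule.span_mono (by simp [Set.pair_comm]))
    have hrank := finrank_range_mkQ_comp_add_finrank_comap φ W
    have hquot := (LinearMap.range (W.mkQ ∘ₗ φ)).finrank_le
    have hsum := W.finrank_quotient_add_finrank
    rw [finrank_span_eq_card hv, Fintype.card_fin] at hsum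
    rw [hH.finrank_eq] at hrank
    omega
  · push Not at hlin
    obtain ⟨c, hc⟩ := LinearMap.exists_eq_smul_id_of_forall_notLinearIndependent hlin
    have hc0 : c ≠ 0 := by
      rintro rfl
      exact hRz (by rw [hc, zero_smul])
    obtain ⟨v, hv⟩ : ∃ v : V, v ≠ 0 := by
      by_contra! h
      exact hRz (LinearMap.ext fun w => by simp [h w])
    by_contra! hV
    exact hexc (hH.eq_one_and_ringChar_eq_two_of_map_eq_smul_one hn R hc0 hc hv (by omega))

end IsHeisenbergBasis

theorem heisenberg_minimal_faithful_dim
    (F : Type) [Field F] {n : ℕ} (hn : 1 ≤ n) {L : Type} [LieRing L] [LieAlgebra F L]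
    (X Y : Fin n → L) (z : L) (hH : IsHeisenbergBasis F X Y z)
    (hexc : ¬(n = 1 ∧ ringChar F = 2)) :
    IsLeast {d : ℕ | ∃ (V : Type) (_ : AddCommGroup V) (_ : Module F V)
      (_ : FiniteDimensional F V) (R : L →ₗ⁅F⁆ Module.End F V),
      Function.Injective R ∧ Module.finrank F V = d} (n + 2) := by
  constructor
  · obtain ⟨R, hR⟩ := hH.exists_injective_lieHom
    refine ⟨_, inferInstance, inferInstance, inferInstance, R, hR, ?_⟩
    simp only [finrank_fintype_fun_eq_card, Fintype.card_sum, Fintype.card_unit,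
      Fintype.card_fin]
    omega
  · rintro d ⟨V, _, _, _, R, hR, rfl⟩
    exact hH.add_two_le_finrank hn hexc R hR
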